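/- arXiv:1409.5015 — 4 statements merged into one kernel-verified Lean document; each statement's English description precedes it below -/
import Mathlib

section
/- Let E be a real inner product space, W a finite-dimensional subspace, x ∈ E, v : Fin n → E, and let b* be feasible (x − ∑ i, b* i • v i ∈ Wᗮ). Then b* minimizes ‖x − ∑ i, b i • v i‖ over all feasible b if and only if the error ε* := x − ∑ i, b* i • v i satisfies ⟪ε*, ∑ i, d i • (v i − P_W (v i))⟫ = 0 for every d : Fin n → ℝ with ∑ i, d i • P_W (v i) = 0. -/
open scoped RealInnerProductSpace

/-! Writing a feasible `b` as `bs + d`, the feasible errors are exactly `ε* - w` with `w` ranging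
over the subspace `K = span (range v) ⊓ Wᗮ`, so `bs` is optimal iff `ε*` is a point of minimal norm
in `ε* - K`, i.e. iff `ε* ⊥ K`. Finally `∑ i, d i • P_W (v i) = 0` says `∑ i, d i • v i ∈ Wᗮ`, and
then `∑ i, d i • (v i - P_W (v i)) = ∑ i, d i • v i`. -/

section

variable {E : Type*} [NormedAddCommGroup E] [InnerProductSpace ℝ E]

theorem Submodule.forall_norm_le_norm_sub_iff_forall_inner_eq_zero (K : Submodule ℝ E) (e : E) :
    (∀ w ∈ K, ‖e‖ ≤ ‖e - w‖) ↔ ∀ w ∈ K, ⟪e, w⟫ = 0 := by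
  have hbdd : BddBelow (Set.range fun w : (K : Set E) => ‖e - w‖) :=
    ⟨0, Set.forall_mem_range.2 fun _ => norm_nonneg _⟩
  have hmin : (∀ w ∈ K, ‖e‖ ≤ ‖e - w‖) ↔ ‖e - 0‖ = ⨅ w : (K : Set E), ‖e - w‖ := by
    rw [sub_zero]
    refine ⟨fun h => le_antisymm (le_ciInf fun w => h w w.2) ?_, fun h w hw => ?_⟩
    · simpa using ciInf_le hbdd ⟨0, K.zero_mem⟩
    · exact h ▸ ciInf_le hbdd ⟨w, hw⟩
  rw [hmin, K.norm_eq_iInf_iff_real_inner_eq_zero K.zero_mem, sub_zero]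

theorem Submodule.sum_smul_orthogonalProjectionOnto_eq_zero_iff {ι : Type*} [Fintype ι]
    (W : Submodule ℝ E) [W.HasOrthogonalProjection] (v : ι → E) (d : ι → ℝ) :
    ∑ i, d i • W.orthogonalProjectionOnto (v i) = 0 ↔ ∑ i, d i • v i ∈ Wᗮ := by
  simp only [← map_smul, ← map_sum, Submodule.orthogonalProjectionOnto_eq_zero_iff]

theorem forall_sub_sum_smul_mem_iff {ι : Type*} [Fintype ι] (S : Submodule ℝ E) (x : E)
    (v : ι → E) (bs : ι → ℝ) (hbs : x - ∑ i, bs i • v i ∈ S) (p : E → Prop) :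
    (∀ b : ι → ℝ, x - ∑ i, b i • v i ∈ S → p (x - ∑ i, b i • v i)) ↔
      ∀ d : ι → ℝ, ∑ i, d i • v i ∈ S → p (x - ∑ i, bs i • v i - ∑ i, d i • v i) := by
  have hshift (b : ι → ℝ) :
      x - ∑ i, b i • v i = x - ∑ i, bs i • v i - ∑ i, (b - bs) i • v i := by
    simp only [Pi.sub_apply, sub_smul, Finset.sum_sub_distrib]; abel
  refine ⟨fun h d hd => ?_, fun h b hb => ?_⟩
  · have := h (bs + d)
    simp only [hshift (bs + d), add_sub_cancel_left] at this
    exact this (S.sub_mem hbs hd)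
  · rw [hshift b] at hb ⊢
    exact h _ (by simpa using S.sub_mem hbs hb)

theorem Submodule.sum_smul_sub_coe_eq_of_sum_smul_eq_zero {ι : Type*} [Fintype ι]
    {W : Submodule ℝ E} (v : ι → E) (u : ι → W) (d : ι → ℝ) (h : ∑ i, d i • u i = 0) :
    ∑ i, d i • (v i - (u i : E)) = ∑ i, d i • v i := by
  have h' : ∑ i, d i • (u i : E) = 0 := by simpa using congrArg W.subtype h
  simp only [smul_sub, Finset.sum_sub_distrib, h', sub_zero]

end

theorem stmt_6 {E : Type*} [NormedAddCommGroup E] [InnerProductSpace ℝ E]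
    (W : Submodule ℝ E) [FiniteDimensional ℝ W] {n : ℕ}
    (x : E) (v : Fin n → E) (bs : Fin n → ℝ)
    (hbs : x - ∑ i, bs i • v i ∈ Wᗮ) :
    (∀ b : Fin n → ℝ, x - ∑ i, b i • v i ∈ Wᗮ →
      ‖x - ∑ i, bs i • v i‖ ≤ ‖x - ∑ i, b i • v i‖) ↔
    (∀ d : Fin n → ℝ, ∑ i, d i • Submodule.orthogonalProjection W (v i) = 0 →
      ⟪x - ∑ i, bs i • v i,
        ∑ i, d i • (v i - (Submodule.orthogonalProjection W (v i) : E))⟫ = 0) := by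
  set e := x - ∑ i, bs i • v i
  set K := LinearMap.range (Fintype.linearCombination ℝ v) ⊓ Wᗮ
  have hK (p : E → Prop) :
      (∀ w ∈ K, p w) ↔ ∀ d : Fin n → ℝ, ∑ i, d i • v i ∈ Wᗮ → p (∑ i, d i • v i) := by
    simp only [K, Submodule.mem_inf, LinearMap.mem_range, Fintype.linearCombination_apply, and_imp,
      forall_exists_index, forall_apply_eq_imp_iff]
  calc _ ↔ ∀ d : Fin n → ℝ, ∑ i, d i • v i ∈ Wᗮ → ‖e‖ ≤ ‖e - ∑ i, d i • v i‖ :=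
        forall_sub_sum_smul_mem_iff Wᗮ x v bs hbs (fun y => ‖e‖ ≤ ‖y‖)
    _ ↔ ∀ w ∈ K, ‖e‖ ≤ ‖e - w‖ := (hK fun w => ‖e‖ ≤ ‖e - w‖).symm
    _ ↔ ∀ w ∈ K, ⟪e, w⟫ = 0 := K.forall_norm_le_norm_sub_iff_forall_inner_eq_zero e
    _ ↔ ∀ d : Fin n → ℝ, ∑ i, d i • v i ∈ Wᗮ → ⟪e, ∑ i, d i • v i⟫ = 0 :=
        hK fun w => ⟪e, w⟫ = 0
    _ ↔ _ := forall_congr' fun d => by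
      rw [← W.sum_smul_orthogonalProjectionOnto_eq_zero_iff]
      exact imp_congr_right fun hd => by
        rw [Submodule.sum_smul_sub_coe_eq_of_sum_smul_eq_zero v _ d hd]
end

section
/- Let E be a real inner product space, v : Fin n → E, U := span ℝ (range v), x ∈ E, and y := x − P_U x. Define U₁ := span ℝ (range (fun i => v i − P_{ℝ∙y} (v i))) and U₂ := span ℝ (range (fun i => v i − P_{ℝ∙x} (v i))). Then for all ν, w ∈ E, writing ν₁ := ν − P_{ℝ∙y} ν and ν₂ := ν − P_{ℝ∙x} ν, one has ⟪ν₁ − P_{U₁} ν₁, w⟫ = ⟪ν₂ − P_{U₂} ν₂, w⟫. -/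
open Submodule
open scoped RealInnerProductSpace

instance spanRangeFiniteDimensional {E : Type*} [NormedAddCommGroup E]
    [InnerProductSpace ℝ E] {n : ℕ} (v : Fin n → E) :
    FiniteDimensional ℝ (Submodule.span ℝ (Set.range v)) :=
  FiniteDimensional.span_of_finite ℝ (Set.finite_range v)

/-!
If `S` is orthogonal to `K`, removing first the `K`-component and then the `S`-component of a
vector removes its `K ⊔ S`-component. With `K` the line through `x` (or through `y`) and `S` the
span of the residuals `v i - P_K (v i)`, which is orthogonal to `K`, the sum `K ⊔ S` is
`K ⊔ span (range v)`, because each residual agrees with `v i` modulo `K`. Finally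
`ℝ ∙ y ⊔ U = ℝ ∙ x ⊔ U` since `y ≡ x` modulo `U`, so both sides equal `⟪ν - P_{ℝ ∙ x ⊔ U} ν, w⟫`.
-/

namespace Submodule

section Quotient

variable {R M ι : Type*} [Ring R] [AddCommGroup M] [Module R M] (K : Submodule R M)

theorem sup_span_range_sub_of_mem (w f : ι → M) (hf : ∀ i, f i ∈ K) :
    K ⊔ span R (Set.range fun i => w i - f i) = K ⊔ span R (Set.range w) := by
  simp only [← comap_map_mkQ, map_span, ← Set.range_comp, Function.comp_def, map_sub,
    mkQ_apply, (Quotient.mk_eq_zero K).2 (hf _), sub_zero]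

theorem span_singleton_sub_sup_of_mem {u : M} (x : M) (hu : u ∈ K) :
    (R ∙ (x - u)) ⊔ K = (R ∙ x) ⊔ K := by
  simp only [sup_comm _ K, ← comap_map_mkQ, map_span, Set.image_singleton, map_sub,
    mkQ_apply, (Quotient.mk_eq_zero K).2 hu, sub_zero]

end Quotient

variable {𝕜 E ι : Type*} [RCLike 𝕜] [NormedAddCommGroup E] [InnerProductSpace 𝕜 E]
  {K S : Submodule 𝕜 E} [K.HasOrthogonalProjection] [S.HasOrthogonalProjection]
  [(K ⊔ S).HasOrthogonalProjection]

theorem IsOrtho.starProjection_sup (h : K ⟂ S) (u : E) :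
    (K ⊔ S).starProjection u = K.starProjection u + S.starProjection u := by
  refine eq_starProjection_of_mem_orthogonal
    (add_mem (mem_sup_left (K.starProjection_apply_mem u))
      (mem_sup_right (S.starProjection_apply_mem u))) ?_
  rw [← inf_orthogonal, sub_add_eq_sub_sub]
  refine ⟨sub_mem (sub_starProjection_mem_orthogonal u) (h.symm (S.starProjection_apply_mem u)), ?_⟩
  rw [sub_right_comm]
  exact sub_mem (sub_starProjection_mem_orthogonal u) (h (K.starProjection_apply_mem u))

theorem IsOrtho.sub_starProjection_sub_starProjection (h : K ⟂ S) (u : E) :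
    u - K.starProjection u - S.starProjection (u - K.starProjection u) =
      u - (K ⊔ S).starProjection u := by
  have hSK : S.starProjection (K.starProjection u) = 0 :=
    congr($(h.symm.starProjection_comp_starProjection) u)
  rw [h.starProjection_sup, map_sub, hSK, sub_zero, sub_add_eq_sub_sub]

theorem isOrtho_span_range_sub_starProjection (v : ι → E) :
    K ⟂ span 𝕜 (Set.range fun i => v i - K.starProjection (v i)) :=
  (isOrtho_orthogonal_right K).mono_right <|
    span_le.2 <| Set.range_subset_iff.2 fun i => sub_starProjection_mem_orthogonal (v i)

theorem sub_starProjection_sub_starProjection_span_range_sub_starProjection (v : ι → E)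
    [(span 𝕜 (Set.range fun i => v i - K.starProjection (v i))).HasOrthogonalProjection]
    [(K ⊔ span 𝕜 (Set.range v)).HasOrthogonalProjection] (u : E) :
    u - K.starProjection u -
        (span 𝕜 (Set.range fun i => v i - K.starProjection (v i))).starProjection
          (u - K.starProjection u) =
      u - (K ⊔ span 𝕜 (Set.range v)).starProjection u := by
  have hsup := K.sup_span_range_sub_of_mem v _ fun i => K.starProjection_apply_mem (v i)
  have : (K ⊔ span 𝕜 (Set.range fun i => v i - K.starProjection (v i))).HasOrthogonalProjection :=
    by rw [hsup]; infer_instance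
  rw [(isOrtho_span_range_sub_starProjection v).sub_starProjection_sub_starProjection]
  simp_rw [hsup]

end Submodule

theorem stmt_11 {E : Type*} [NormedAddCommGroup E] [InnerProductSpace ℝ E]
    {n : ℕ} (v : Fin n → E) (x : E) (y : E)
    (hy : y = x - (orthogonalProjection (Submodule.span ℝ (Set.range v)) x : E)) :
    ∀ ν w : E,
      ⟪(ν - (orthogonalProjection (ℝ ∙ y) ν : E)) -
          (orthogonalProjection
            (Submodule.span ℝ
              (Set.range (fun i => v i - (orthogonalProjection (ℝ ∙ y) (v i) : E))))
            (ν - (orthogonalProjection (ℝ ∙ y) ν : E)) : E), w⟫ =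
      ⟪(ν - (orthogonalProjection (ℝ ∙ x) ν : E)) -
          (orthogonalProjection
            (Submodule.span ℝ
              (Set.range (fun i => v i - (orthogonalProjection (ℝ ∙ x) (v i) : E))))
            (ν - (orthogonalProjection (ℝ ∙ x) ν : E)) : E), w⟫ := by
  intro ν w
  have hsup : (ℝ ∙ y) ⊔ span ℝ (Set.range v) = (ℝ ∙ x) ⊔ span ℝ (Set.range v) := by
    rw [hy]
    exact span_singleton_sub_sup_of_mem _ x (starProjection_apply_mem _ x)
  congr 1
  calc _ = ν - ((ℝ ∙ y) ⊔ span ℝ (Set.range v)).starProjection ν :=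
        sub_starProjection_sub_starProjection_span_range_sub_starProjection v ν
    _ = ν - ((ℝ ∙ x) ⊔ span ℝ (Set.range v)).starProjection ν := by simp_rw [hsup]
    _ = _ := (sub_starProjection_sub_starProjection_span_range_sub_starProjection v ν).symm
end

section
/- Let E be a real inner product space, U a finite-dimensional subspace of E, x ∈ E, and y := x − P_U x. Then for all ν, w ∈ E: ⟪ν − P_{U ⊔ ℝ∙x} ν, w⟫ = ⟪ν − P_U ν, w⟫ − ⟪P_{ℝ∙y} ν, w⟫. -/
open Submodule
open scoped RealInnerProductSpace

/-! Since `x - P_U x` differs from `x` by an element of `U`, it spans the same enlargement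
`U ⊔ ℝ∙x`, and it is orthogonal to `U`; the projection onto the sum of two orthogonal subspaces
is the sum of the two projections. -/

namespace Submodule

variable {𝕜 E : Type*} [RCLike 𝕜] [NormedAddCommGroup E] [InnerProductSpace 𝕜 E]

theorem starProjection_sup_apply_of_isOrtho {K L : Submodule 𝕜 E} [K.HasOrthogonalProjection]
    [L.HasOrthogonalProjection] [(K ⊔ L).HasOrthogonalProjection] (h : K ⟂ L) (v : E) :
    (K ⊔ L).starProjection v = K.starProjection v + L.starProjection v := by
  refine eq_starProjection_of_mem_orthogonal
    (add_mem (mem_sup_left (K.starProjection_apply_mem v))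
      (mem_sup_right (L.starProjection_apply_mem v))) ?_
  rw [← inf_orthogonal]
  constructor
  · rw [sub_add_eq_sub_sub]
    exact sub_mem (K.sub_starProjection_mem_orthogonal v) (h.symm.le (L.starProjection_apply_mem v))
  · rw [add_comm, sub_add_eq_sub_sub]
    exact sub_mem (L.sub_starProjection_mem_orthogonal v) (h.le (K.starProjection_apply_mem v))

theorem sup_span_singleton_sub_of_mem {K : Submodule 𝕜 E} {k : E} (hk : k ∈ K) (x : E) :
    K ⊔ (𝕜 ∙ (x - k)) = K ⊔ (𝕜 ∙ x) := by
  apply le_antisymm <;> refine sup_le le_sup_left ((span_singleton_le_iff_mem _ _).mpr ?_)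
  · exact sub_mem (mem_sup_right (mem_span_singleton_self x)) (mem_sup_left hk)
  · simpa using add_mem (mem_sup_right (mem_span_singleton_self (x - k))) (mem_sup_left hk)

theorem starProjection_sup_span_singleton_apply (K : Submodule 𝕜 E) [K.HasOrthogonalProjection]
    (x : E) [(K ⊔ (𝕜 ∙ x)).HasOrthogonalProjection] (v : E) :
    (K ⊔ (𝕜 ∙ x)).starProjection v =
      K.starProjection v + (𝕜 ∙ (x - K.starProjection x)).starProjection v := by
  have hsup := sup_span_singleton_sub_of_mem (K.starProjection_apply_mem x) x
  have hortho : K ⟂ (𝕜 ∙ (x - K.starProjection x)) := (isOrtho_iff_le.mpr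
    ((span_singleton_le_iff_mem _ _).mpr (K.sub_starProjection_mem_orthogonal x))).symm
  have : (K ⊔ (𝕜 ∙ (x - K.starProjection x))).HasOrthogonalProjection := by
    rw [hsup]; infer_instance
  rw [← starProjection_sup_apply_of_isOrtho hortho]
  simp only [hsup]

end Submodule

theorem stmt_12 {E : Type*} [NormedAddCommGroup E] [InnerProductSpace ℝ E]
    (U : Submodule ℝ E) [FiniteDimensional ℝ U] (x : E) (y : E)
    (hy : y = x - (orthogonalProjection U x : E)) :
    ∀ ν w : E,
      ⟪ν - (orthogonalProjection (U ⊔ (ℝ ∙ x)) ν : E), w⟫ =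
        ⟪ν - (orthogonalProjection U ν : E), w⟫ -
          ⟪(orthogonalProjection (ℝ ∙ y) ν : E), w⟫ := by
  intro ν w
  simp only [← starProjection_apply, hy, starProjection_sup_span_singleton_apply]
  rw [← sub_sub, inner_sub_left]
end

section
/- Let E be a real inner product space, U a finite-dimensional subspace of E, and v ∈ E with v ∉ U (equivalently v − P_U v ≠ 0). Then for all ν, w ∈ E: ⟪ν − P_{U ⊔ ℝ∙v} ν, w⟫ = ⟪ν − P_U ν, w⟫ − (⟪ν − P_U ν, v⟫ * ⟪v − P_U v, w⟫) / ⟪v − P_U v, v⟫, where the denominator ⟪v − P_U v, v⟫ = ‖v − P_U v‖² is nonzero. -/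
/-!
Put `e = v - P_U v ∈ Uᗮ`. Then `U ⊔ ℝ∙v = U ⊔ ℝ∙e` is an orthogonal sum, so
`P_{U ⊔ ℝ∙v} = P_U + P_{ℝ∙e}` with `P_{ℝ∙e} ν = (⟪e, ν⟫ / ‖e‖²) e`. Self-adjointness of
`1 - P_U` turns `⟪e, ν⟫` into `⟪ν - P_U ν, v⟫` and `‖e‖²` into `⟪e, v⟫`.
-/

open Submodule
open scoped RealInnerProductSpace InnerProductSpace

namespace Submodule

variable {𝕜 E : Type*} [RCLike 𝕜] [NormedAddCommGroup E] [InnerProductSpace 𝕜 E]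

theorem IsOrtho.starProjection_apply_of_sup_eq {K L M : Submodule 𝕜 E}
    [K.HasOrthogonalProjection] [L.HasOrthogonalProjection] [M.HasOrthogonalProjection]
    (h : K ⟂ L) (hM : K ⊔ L = M) (x : E) :
    M.starProjection x = K.starProjection x + L.starProjection x := by
  subst hM
  refine eq_starProjection_of_mem_orthogonal
    (add_mem (mem_sup_left (K.starProjection_apply_mem x))
      (mem_sup_right (L.starProjection_apply_mem x))) ?_
  rw [← inf_orthogonal]
  constructor
  · rw [← sub_sub]
    exact sub_mem (K.sub_starProjection_mem_orthogonal x) (h.symm (L.starProjection_apply_mem x))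
  · rw [sub_add_eq_sub_sub_swap]
    exact sub_mem (L.sub_starProjection_mem_orthogonal x) (h (K.starProjection_apply_mem x))

variable (K : Submodule 𝕜 E) [K.HasOrthogonalProjection]

theorem sup_span_singleton_sub_starProjection (v : E) :
    K ⊔ 𝕜 ∙ (v - K.starProjection v) = K ⊔ 𝕜 ∙ v := by
  have hPv : K.starProjection v ∈ K ⊔ 𝕜 ∙ (v - K.starProjection v) :=
    mem_sup_left (K.starProjection_apply_mem v)
  refine le_antisymm (sup_le le_sup_left ?_) (sup_le le_sup_left ?_) <;>
    rw [span_singleton_le_iff_mem]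
  · exact sub_mem (mem_sup_right (mem_span_singleton_self v))
      (mem_sup_left (K.starProjection_apply_mem v))
  · simpa using add_mem (mem_sup_right (mem_span_singleton_self _)) hPv

theorem inner_sub_starProjection_left_eq_right (u v : E) :
    ⟪u - K.starProjection u, v⟫_𝕜 = ⟪u, v - K.starProjection v⟫_𝕜 := by
  simpa only [starProjection_orthogonal_val] using Kᗮ.inner_starProjection_left_eq_right u v

theorem inner_sub_starProjection_self (v : E) :
    ⟪v - K.starProjection v, v⟫_𝕜 = (‖v - K.starProjection v‖ : 𝕜) ^ 2 := by
  rw [← inner_self_eq_norm_sq_to_K, inner_sub_right,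
    K.starProjection_inner_eq_zero v _ (K.starProjection_apply_mem v), sub_zero]

theorem inner_sub_starProjection_sup_span_singleton (v : E)
    [(K ⊔ 𝕜 ∙ v).HasOrthogonalProjection] (ν w : E) :
    ⟪ν - (K ⊔ 𝕜 ∙ v).starProjection ν, w⟫_𝕜 =
      ⟪ν - K.starProjection ν, w⟫_𝕜 -
        ⟪ν - K.starProjection ν, v⟫_𝕜 * ⟪v - K.starProjection v, w⟫_𝕜 /
          ⟪v - K.starProjection v, v⟫_𝕜 := by
  have hK : K ⟂ 𝕜 ∙ (v - K.starProjection v) := K.isOrtho_orthogonal_right.mono_right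
    ((span_singleton_le_iff_mem _ _).mpr (K.sub_starProjection_mem_orthogonal v))
  rw [hK.starProjection_apply_of_sup_eq (K.sup_span_singleton_sub_starProjection v),
    starProjection_singleton, sub_add_eq_sub_sub, inner_sub_left (x := ν - _), inner_smul_left,
    map_div₀, inner_conj_symm, RCLike.conj_ofReal, ← inner_sub_starProjection_left_eq_right,
    inner_sub_starProjection_self, RCLike.ofReal_pow]
  ring

end Submodule

theorem stmt_13 {E : Type*} [NormedAddCommGroup E] [InnerProductSpace ℝ E]
    (U : Submodule ℝ E) [FiniteDimensional ℝ U] (v : E) (hv : v ∉ U) :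
    ⟪v - (orthogonalProjection U v : E), v⟫ = ‖v - (orthogonalProjection U v : E)‖ ^ 2 ∧
    ⟪v - (orthogonalProjection U v : E), v⟫ ≠ 0 ∧
    ∀ ν w : E,
      ⟪ν - (orthogonalProjection (U ⊔ (ℝ ∙ v)) ν : E), w⟫ =
        ⟪ν - (orthogonalProjection U ν : E), w⟫ -
          ⟪ν - (orthogonalProjection U ν : E), v⟫ *
              ⟪v - (orthogonalProjection U v : E), w⟫ /
            ⟪v - (orthogonalProjection U v : E), v⟫ := by
  have hnorm : ⟪v - U.starProjection v, v⟫ = ‖v - U.starProjection v‖ ^ 2 := by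
    simpa using U.inner_sub_starProjection_self (𝕜 := ℝ) v
  have hne : v - U.starProjection v ≠ 0 :=
    sub_ne_zero.mpr fun h => hv (starProjection_eq_self_iff.mp h.symm)
  exact ⟨hnorm, hnorm ▸ by positivity, U.inner_sub_starProjection_sup_span_singleton v⟩
end
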